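/- arXiv:1611.08923 — 7 statements merged into one kernel-verified Lean document; each statement's English description precedes it below -/
import Mathlib

section
/- The map Y_{a,b}(x1,x2,y1,y2) = (y1 + (a-b)/(x1-y2), y2, x1, x2 + (a-b)/(x1-y2)), defined for x1 ≠ y2, satisfies the parametric Yang-Baxter equation Y^{12}_{a,b} ∘ Y^{13}_{a,c} ∘ Y^{23}_{b,c} = Y^{23}_{b,c} ∘ Y^{13}_{a,c} ∘ Y^{12}_{a,b} (as partial maps, on points where all denominators involved are nonzero). -/
/-!
Write `p = x₁ - y₂` and `q = y₁ - z₂` for the denominators of the input `(x, y, z)`. Both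
composites send `(x, y, z)` to `(z + (u, 0), y + (v, u), x + (0, v))` with
`u = (a - c) p / (pq + a - b)` and `v = (a - c) q / (pq - b + c)`: on each side the two shifts
by `a - b` and `b - c` of one coordinate merge into a single shift by `a - c`, because
`(b - c)(pq + a - b) + (a - b)(pq - b + c) = (a - c) pq` (the cross terms cancel).
-/

/-- The dpKdV-lift Yang-Baxter map on pairs of points of `K × K`. -/
noncomputable def YBlift {K : Type*} [Field K] (a b : K)
    (p : (K × K) × (K × K)) : (K × K) × (K × K) :=
  ((p.2.1 + (a - b) / (p.1.1 - p.2.2), p.2.2),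
   (p.1.1, p.1.2 + (a - b) / (p.1.1 - p.2.2)))

/-- The denominator appearing in `YBlift`. -/
def YBden {K : Type*} [Field K] (p : (K × K) × (K × K)) : K := p.1.1 - p.2.2

noncomputable def Y12 {K : Type*} [Field K] (a b : K)
    (t : (K × K) × (K × K) × (K × K)) : (K × K) × (K × K) × (K × K) :=
  ((YBlift a b (t.1, t.2.1)).1, (YBlift a b (t.1, t.2.1)).2, t.2.2)

noncomputable def Y23 {K : Type*} [Field K] (b c : K)
    (t : (K × K) × (K × K) × (K × K)) : (K × K) × (K × K) × (K × K) :=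
  (t.1, (YBlift b c (t.2.1, t.2.2)).1, (YBlift b c (t.2.1, t.2.2)).2)

noncomputable def Y13 {K : Type*} [Field K] (a c : K)
    (t : (K × K) × (K × K) × (K × K)) : (K × K) × (K × K) × (K × K) :=
  ((YBlift a c (t.1, t.2.2)).1, t.2.1, (YBlift a c (t.1, t.2.2)).2)

section
variable {K : Type*} [Field K]

theorem YBden_Y23 (b c : K) (t : (K × K) × (K × K) × (K × K))
    (hq : YBden (t.2.1, t.2.2) ≠ 0) :
    YBden ((Y23 b c t).1, (Y23 b c t).2.2) =
      (YBden (t.1, t.2.1) * YBden (t.2.1, t.2.2) - (b - c)) / YBden (t.2.1, t.2.2) := by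
  simp only [YBden, Y23, YBlift] at *
  field_simp
  ring

theorem YBden_Y12 (a b : K) (t : (K × K) × (K × K) × (K × K))
    (hp : YBden (t.1, t.2.1) ≠ 0) :
    YBden ((Y12 a b t).1, (Y12 a b t).2.2) =
      (YBden (t.1, t.2.1) * YBden (t.2.1, t.2.2) + (a - b)) / YBden (t.1, t.2.1) := by
  simp only [YBden, Y12, YBlift] at *
  field_simp
  ring

theorem shifts_add_left (α β p q : K) (hq : q ≠ 0) (hα : p * q + α ≠ 0) :
    β / q + α * (p * q - β) / (q * (p * q + α)) = (α + β) * p / (p * q + α) := by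
  rw [div_add_div _ _ hq (mul_ne_zero hq hα),
    div_eq_div_iff (mul_ne_zero hq (mul_ne_zero hq hα)) hα]
  ring

theorem shifts_add_right (α β p q : K) (hp : p ≠ 0) (hβ : p * q - β ≠ 0) :
    α / p + β * (p * q + α) / (p * (p * q - β)) = (α + β) * q / (p * q - β) := by
  rw [div_add_div _ _ hp (mul_ne_zero hp hβ),
    div_eq_div_iff (mul_ne_zero hp (mul_ne_zero hp hβ)) hβ]
  ring

noncomputable def ybComposite (a b c : K) (t : (K × K) × (K × K) × (K × K)) :
    (K × K) × (K × K) × (K × K) :=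
  let p := YBden (t.1, t.2.1)
  let q := YBden (t.2.1, t.2.2)
  let u := (a - c) * p / (p * q + (a - b))
  let v := (a - c) * q / (p * q - (b - c))
  ((t.2.2.1 + u, t.2.2.2), (t.2.1.1 + v, t.2.1.2 + u), (t.1.1, t.1.2 + v))

theorem Y12_Y13_Y23_eq_ybComposite (a b c : K) (t : (K × K) × (K × K) × (K × K))
    (hq : YBden (t.2.1, t.2.2) ≠ 0)
    (hbc : YBden (t.1, t.2.1) * YBden (t.2.1, t.2.2) - (b - c) ≠ 0)
    (hab : YBden (t.1, t.2.1) * YBden (t.2.1, t.2.2) + (a - b) ≠ 0) :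
    Y12 a b (Y13 a c (Y23 b c t)) = ybComposite a b c t := by
  have den₂ := YBden_Y23 b c t hq
  obtain ⟨⟨x1, x2⟩, ⟨y1, y2⟩, ⟨z1, z2⟩⟩ := t
  simp only [ybComposite, Y12, Y23, Y13, YBlift, YBden] at *
  rw [den₂, div_div_eq_mul_div]
  have den₃ : y1 + (a - c) * (y1 - z2) / ((x1 - y2) * (y1 - z2) - (b - c)) - z2 =
      (y1 - z2) * ((x1 - y2) * (y1 - z2) + (a - b)) / ((x1 - y2) * (y1 - z2) - (b - c)) := by
    rw [eq_div_iff hbc, sub_mul, add_mul, div_mul_cancel₀ _ hbc]; ring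
  rw [den₃, div_div_eq_mul_div, add_assoc z1, add_assoc y2,
    shifts_add_left (a - b) (b - c) _ _ hq hab, sub_add_sub_cancel]

theorem Y23_Y13_Y12_eq_ybComposite (a b c : K) (t : (K × K) × (K × K) × (K × K))
    (hp : YBden (t.1, t.2.1) ≠ 0)
    (hbc : YBden (t.1, t.2.1) * YBden (t.2.1, t.2.2) - (b - c) ≠ 0)
    (hab : YBden (t.1, t.2.1) * YBden (t.2.1, t.2.2) + (a - b) ≠ 0) :
    Y23 b c (Y13 a c (Y12 a b t)) = ybComposite a b c t := by
  have den₂ := YBden_Y12 a b t hp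
  obtain ⟨⟨x1, x2⟩, ⟨y1, y2⟩, ⟨z1, z2⟩⟩ := t
  simp only [ybComposite, Y12, Y23, Y13, YBlift, YBden] at *
  rw [den₂, div_div_eq_mul_div]
  have den₃ : x1 - (y2 + (a - c) * (x1 - y2) / ((x1 - y2) * (y1 - z2) + (a - b))) =
      (x1 - y2) * ((x1 - y2) * (y1 - z2) - (b - c)) / ((x1 - y2) * (y1 - z2) + (a - b)) := by
    rw [eq_div_iff hab, sub_mul, add_mul, div_mul_cancel₀ _ hab]; ring
  rw [den₃, div_div_eq_mul_div, add_assoc y1, add_assoc x2,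
    shifts_add_right (a - b) (b - c) _ _ hp hbc, sub_add_sub_cancel]

end

theorem yblift_parametric_yang_baxter_general {K : Type*} [Field K] (a b c : K)
    (t : (K × K) × (K × K) × (K × K))
    (h1 : YBden (t.2.1, t.2.2) ≠ 0)
    (h2 : YBden ((Y23 b c t).1, (Y23 b c t).2.2) ≠ 0)
    (h4 : YBden (t.1, t.2.1) ≠ 0)
    (h5 : YBden ((Y12 a b t).1, (Y12 a b t).2.2) ≠ 0) :
    Y12 a b (Y13 a c (Y23 b c t)) = Y23 b c (Y13 a c (Y12 a b t)) := by
  rw [YBden_Y23 b c t h1, div_ne_zero_iff] at h2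
  rw [YBden_Y12 a b t h4, div_ne_zero_iff] at h5
  rw [Y12_Y13_Y23_eq_ybComposite a b c t h1 h2.1 h5.1,
    Y23_Y13_Y12_eq_ybComposite a b c t h4 h2.1 h5.1]

/-- The map `Y_{a,b}` satisfies the parametric Yang-Baxter equation, on points
where all denominators involved in both compositions are nonzero. -/
theorem yblift_parametric_yang_baxter {K : Type*} [Field K] (a b c : K)
    (t : (K × K) × (K × K) × (K × K))
    (h1 : YBden (t.2.1, t.2.2) ≠ 0)
    (h2 : YBden ((Y23 b c t).1, (Y23 b c t).2.2) ≠ 0)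
    (h3 : YBden ((Y13 a c (Y23 b c t)).1, (Y13 a c (Y23 b c t)).2.1) ≠ 0)
    (h4 : YBden (t.1, t.2.1) ≠ 0)
    (h5 : YBden ((Y12 a b t).1, (Y12 a b t).2.2) ≠ 0)
    (h6 : YBden ((Y13 a c (Y12 a b t)).2.1, (Y13 a c (Y12 a b t)).2.2) ≠ 0) :
    Y12 a b (Y13 a c (Y23 b c t)) = Y23 b c (Y13 a c (Y12 a b t)) :=
  yblift_parametric_yang_baxter_general a b c t h1 h2 h4 h5
end

section
/- For the map Y_{a,b}(x1,x2,y1,y2) = (u1,u2,v1,v2) with u1 = y1 + (a-b)/(x1-y2), u2 = y2, v1 = x1, v2 = x2 + (a-b)/(x1-y2), the matrix refactorization identity L_a(u1,u2) L_b(v1,v2) = L_b(y1,y2) L_a(x1,x2) holds for all values of the spectral parameter λ, where L_a(x1,x2) is the 2×2 matrix [[x1, a + x1·x2 − λ], [−1, −x2]]. -/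
/-- The 2×2 Lax matrix of the dpKdV lift. -/
def LaxKdV {K : Type*} [Field K] (a lam x1 x2 : K) : Matrix (Fin 2) (Fin 2) K :=
  !![x1, a + x1 * x2 - lam; -1, -x2]

/-- The refactorization identity for the Yang-Baxter map
`(x1,x2,y1,y2) ↦ (y1+(a-b)/(x1-y2), y2, x1, x2+(a-b)/(x1-y2))`. -/
theorem yblift_lax_refactorization {K : Type*} [Field K] (a b : K)
    (x1 x2 y1 y2 : K) (h : x1 ≠ y2) (lam : K) :
    LaxKdV a lam (y1 + (a - b) / (x1 - y2)) y2 *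
      LaxKdV b lam x1 (x2 + (a - b) / (x1 - y2)) =
    LaxKdV b lam y1 y2 * LaxKdV a lam x1 x2 := by
  have hd : x1 - y2 ≠ 0 := sub_ne_zero.mpr h
  unfold LaxKdV
  ext i j
  fin_cases i <;> fin_cases j <;>
    simp [Matrix.mul_apply, Fin.sum_univ_two] <;> field_simp <;> ring
end

section
/- The commutative map Y_{a,b} sending (x1,x2,X1,X2,y1,y2,Y1,Y2) to (u1,u2,U1,U2,v1,v2,V1,V2) with D = x1 − y2 + X1·Y2, u1 = y1 + (a−b)/D, u2 = y2, U1 = Y1 − ((a−b)/D)·X1, U2 = Y2, v1 = x1, v2 = x2 + (a−b)/D, V1 = X1, V2 = X2 + ((a−b)/D)·Y2, satisfies the Lax equation L_a(u1,u2,U1,U2)·L_b(v1,v2,V1,V2) = L_b(y1,y2,Y1,Y2)·L_a(x1,x2,X1,X2) for all λ, where L_a(x1,x2,X1,X2) is the 3×3 matrix [[x1, a + x1·x2 + X1·X2 − λ, X1], [−1, −x2, 0], [0, X2, 1]]. -/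
/-- The 3×3 commutative Lax matrix `L_a(x1,x2,X1,X2)`. -/
def Lax3 {K : Type*} [Field K] (a lam x1 x2 X1 X2 : K) : Matrix (Fin 3) (Fin 3) K :=
  !![x1, a + x1 * x2 + X1 * X2 - lam, X1; -1, -x2, 0; 0, X2, 1]

/-- The eight-dimensional commutative Yang-Baxter map satisfies the Lax equation. -/
theorem commYB_lax_equation {K : Type*} [Field K] (a b : K)
    (x1 x2 X1 X2 y1 y2 Y1 Y2 : K) (hD : x1 - y2 + X1 * Y2 ≠ 0) (lam : K) :
    Lax3 a lam (y1 + (a - b) / (x1 - y2 + X1 * Y2)) y2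
        (Y1 - ((a - b) / (x1 - y2 + X1 * Y2)) * X1) Y2 *
      Lax3 b lam x1 (x2 + (a - b) / (x1 - y2 + X1 * Y2)) X1
        (X2 + ((a - b) / (x1 - y2 + X1 * Y2)) * Y2) =
    Lax3 b lam y1 y2 Y1 Y2 * Lax3 a lam x1 x2 X1 X2 := by
  unfold Lax3
  ext i j
  fin_cases i <;> fin_cases j <;>
    simp [Matrix.mul_apply, Fin.sum_univ_succ] <;>
    field_simp <;> ring
end

section
/- The eight-dimensional commutative map Y_{a,b} defined by D = x1 − y2 + X1·Y2, u1 = y1 + (a−b)/D, u2 = y2, U1 = Y1 − ((a−b)/D)·X1, U2 = Y2, v1 = x1, v2 = x2 + (a−b)/D, V1 = X1, V2 = X2 + ((a−b)/D)·Y2 satisfies the parametric Yang-Baxter equation Y^{12}_{a,b} ∘ Y^{13}_{a,c} ∘ Y^{23}_{b,c} = Y^{23}_{b,c} ∘ Y^{13}_{a,c} ∘ Y^{12}_{a,b} on points where all denominators appearing in the compositions are nonzero. -/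
/-- Points of `V = K^4`, with coordinates `(x1, x2, X1, X2)`. -/
abbrev V4 (K : Type*) := K × K × K × K

/-- The denominator `D = x1 - y2 + X1·Y2` of the commutative Yang-Baxter map. -/
def Dden {K : Type*} [Field K] (p q : V4 K) : K :=
  p.1 - q.2.1 + p.2.2.1 * q.2.2.2

/-- The eight-dimensional commutative Yang-Baxter map `Y_{a,b}` on `V × V`. -/
noncomputable def commYB {K : Type*} [Field K] (a b : K)
    (pq : V4 K × V4 K) : V4 K × V4 K :=
  ((pq.2.1 + (a - b) / Dden pq.1 pq.2, pq.2.2.1,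
    pq.2.2.2.1 - ((a - b) / Dden pq.1 pq.2) * pq.1.2.2.1, pq.2.2.2.2),
   (pq.1.1, pq.1.2.1 + (a - b) / Dden pq.1 pq.2,
    pq.1.2.2.1, pq.1.2.2.2 + ((a - b) / Dden pq.1 pq.2) * pq.2.2.2.2))

noncomputable def commYB12 {K : Type*} [Field K] (a b : K)
    (t : V4 K × V4 K × V4 K) : V4 K × V4 K × V4 K :=
  ((commYB a b (t.1, t.2.1)).1, (commYB a b (t.1, t.2.1)).2, t.2.2)

noncomputable def commYB23 {K : Type*} [Field K] (b c : K)
    (t : V4 K × V4 K × V4 K) : V4 K × V4 K × V4 K :=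
  (t.1, (commYB b c (t.2.1, t.2.2)).1, (commYB b c (t.2.1, t.2.2)).2)

noncomputable def commYB13 {K : Type*} [Field K] (a c : K)
    (t : V4 K × V4 K × V4 K) : V4 K × V4 K × V4 K :=
  ((commYB a c (t.1, t.2.2)).1, t.2.1, (commYB a c (t.1, t.2.2)).2)

/-!
`Y_{a,b}(p, q)` exchanges `p` and `q` and shifts the left point along `(0, 1, 0, Q₂)` and the right
one along `(1, 0, -P₁, 0)`, both by the flux `f = (a - b) / D(p, q)`. The two sides of the
Yang–Baxter equation are three such exchanges each, with fluxes `g₁, g₂, g₃` and `h₁, h₂, h₃`, and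
they agree as soon as `g₂ = h₁ + h₃`, `g₁ + g₃ = h₂`, `g₁ g₂ = h₂ h₃` and `g₂ g₃ = h₁ h₂`.
With `d = D(x, y)`, `e = D(y, z)`, `k = 1 - X₁ Z₂`, `P = d e - (b - c) k`, `Q = d e + (a - b) k`
the fluxes are `g = ((b - c)/e, (a - c) e/P, (a - b) P/(e Q))` and
`h = ((a - b)/d, (a - c) d/Q, (b - c) Q/(d P))`: the product identities are then immediate and
the sum identities both come down to `(a - b) P + (b - c) Q = (a - c) d e`.
-/

namespace CommYB

variable {K : Type*} [Field K]

def exchange (f : K) (p q : V4 K) : V4 K × V4 K :=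
  ((q.1 + f, q.2.1, q.2.2.1 - f * p.2.2.1, q.2.2.2), (p.1, p.2.1 + f, p.2.2.1, p.2.2.2 + f * q.2.2.2))

theorem commYB_eq_exchange (a b : K) (p q : V4 K) :
    commYB a b (p, q) = exchange ((a - b) / Dden p q) p q :=
  rfl

theorem exchange_snd_snd_snd_fst (f : K) (p q : V4 K) :
    (exchange f p q).2.2.2.1 = p.2.2.1 :=
  rfl

theorem Dden_exchange_snd_left (f : K) (p q r : V4 K) :
    Dden (exchange f p q).2 r = Dden p r :=
  rfl

theorem Dden_exchange_fst_right (f : K) (p q r : V4 K) :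
    Dden r (exchange f p q).1 = Dden r q :=
  rfl

theorem Dden_exchange_fst_left (f : K) (p q r : V4 K) :
    Dden (exchange f p q).1 r = Dden q r + f * (1 - p.2.2.1 * r.2.2.2) := by
  simp only [Dden, exchange]
  ring

theorem Dden_exchange_snd_right (f : K) (p q r : V4 K) :
    Dden p (exchange f q r).2 = Dden p q - f * (1 - p.2.2.1 * r.2.2.2) := by
  simp only [Dden, exchange]
  ring

theorem exchange_yang_baxter (x y z : V4 K) {g₁ g₂ g₃ h₁ h₂ h₃ : K}
    (hA : g₂ = h₁ + h₃) (hB : g₁ + g₃ = h₂) (hC : g₁ * g₂ = h₂ * h₃) (hD : g₂ * g₃ = h₁ * h₂) :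
    let zy := exchange g₁ y z
    let yx := exchange g₂ x zy.2
    let yx' := exchange h₁ x y
    let zy' := exchange h₂ yx'.1 z
    ((exchange g₃ yx.1 zy.1).1, (exchange g₃ yx.1 zy.1).2, yx.2) =
      (zy'.1, exchange h₃ yx'.2 zy'.2) := by
  simp only [exchange, Prod.mk.injEq, true_and, and_true]
  refine ⟨⟨?_, ?_⟩, ⟨?_, ?_, ?_, ?_⟩, ⟨?_, ?_⟩⟩
  · linear_combination hB
  · linear_combination (-y.2.2.1) * hB + x.2.2.1 * hD
  · linear_combination hA
  · linear_combination hB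
  · linear_combination (-x.2.2.1) * hA
  · linear_combination z.2.2.2 * hB
  · linear_combination hA
  · linear_combination y.2.2.2 * hA + z.2.2.2 * hC

theorem flux_identities {a b c d e k g₁ g₂ g₃ h₁ h₂ h₃ : K} (hd : d ≠ 0) (he : e ≠ 0)
    (hg₁ : g₁ = (b - c) / e) (hg₂ : g₂ = (a - c) / (d - g₁ * k)) (hg₃ : g₃ = (a - b) / (e + g₂ * k))
    (hh₁ : h₁ = (a - b) / d) (hh₂ : h₂ = (a - c) / (e + h₁ * k)) (hh₃ : h₃ = (b - c) / (d - h₂ * k))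
    (hdg : d - g₁ * k ≠ 0) (heh : e + h₁ * k ≠ 0) :
    g₂ = h₁ + h₃ ∧ g₁ + g₃ = h₂ ∧ g₁ * g₂ = h₂ * h₃ ∧ g₂ * g₃ = h₁ * h₂ := by
  obtain ⟨P, hPdef⟩ : ∃ P, P = d * e - (b - c) * k := ⟨_, rfl⟩
  obtain ⟨Q, hQP⟩ : ∃ Q, Q = P + (a - c) * k := ⟨_, rfl⟩
  have hdg' : d - g₁ * k = P / e := by rw [hg₁, hPdef]; field_simp
  have heh' : e + h₁ * k = Q / d := by rw [hh₁, hQP, hPdef]; field_simp; ring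
  have hP : P ≠ 0 := fun h ↦ hdg (by rw [hdg', h, zero_div])
  have hQ : Q ≠ 0 := fun h ↦ heh (by rw [heh', h, zero_div])
  have hg₂' : g₂ = (a - c) * e / P := by rw [hg₂, hdg', div_div_eq_mul_div]
  have hh₂' : h₂ = (a - c) * d / Q := by rw [hh₂, heh', div_div_eq_mul_div]
  have heg : e + g₂ * k = e * Q / P := by rw [hg₂', hQP]; field_simp
  have hdh : d - h₂ * k = d * P / Q := by rw [hh₂']; field_simp; linear_combination hQP
  have hg₃' : g₃ = (a - b) * P / (e * Q) := by rw [hg₃, heg, div_div_eq_mul_div]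
  have hh₃' : h₃ = (b - c) * Q / (d * P) := by rw [hh₃, hdh, div_div_eq_mul_div]
  have key : (a - b) * P + (b - c) * Q = (a - c) * d * e := by rw [hQP, hPdef]; ring
  rw [hg₁, hg₂', hg₃', hh₁, hh₂', hh₃']
  refine ⟨?_, ?_, ?_, ?_⟩
  · field_simp
    linear_combination -key
  · field_simp
    linear_combination key
  · field_simp
  · field_simp

end CommYB

theorem commYB_parametric_yang_baxter_general {K : Type*} [Field K] (a b c : K)
    (t : V4 K × V4 K × V4 K)
    (h1 : Dden t.2.1 t.2.2 ≠ 0)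
    (h2 : Dden (commYB23 b c t).1 (commYB23 b c t).2.2 ≠ 0)
    (h4 : Dden t.1 t.2.1 ≠ 0)
    (h5 : Dden (commYB12 a b t).1 (commYB12 a b t).2.2 ≠ 0) :
    commYB12 a b (commYB13 a c (commYB23 b c t)) =
      commYB23 b c (commYB13 a c (commYB12 a b t)) := by
  simp only [commYB12, commYB13, commYB23, CommYB.commYB_eq_exchange,
    CommYB.Dden_exchange_fst_left, CommYB.Dden_exchange_snd_right, CommYB.Dden_exchange_snd_left,
    CommYB.Dden_exchange_fst_right, CommYB.exchange_snd_snd_snd_fst] at h2 h5 ⊢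
  obtain ⟨hA, hB, hC, hD⟩ := CommYB.flux_identities h4 h1 rfl rfl rfl rfl rfl rfl h2 h5
  exact CommYB.exchange_yang_baxter t.1 t.2.1 t.2.2 hA hB hC hD

/-- The eight-dimensional commutative map `Y_{a,b}` satisfies the parametric
Yang-Baxter equation, on points where all denominators appearing in the
compositions are nonzero. -/
theorem commYB_parametric_yang_baxter {K : Type*} [Field K] (a b c : K)
    (t : V4 K × V4 K × V4 K)
    (h1 : Dden t.2.1 t.2.2 ≠ 0)
    (h2 : Dden (commYB23 b c t).1 (commYB23 b c t).2.2 ≠ 0)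
    (h3 : Dden (commYB13 a c (commYB23 b c t)).1 (commYB13 a c (commYB23 b c t)).2.1 ≠ 0)
    (h4 : Dden t.1 t.2.1 ≠ 0)
    (h5 : Dden (commYB12 a b t).1 (commYB12 a b t).2.2 ≠ 0)
    (h6 : Dden (commYB13 a c (commYB12 a b t)).2.1 (commYB13 a c (commYB12 a b t)).2.2 ≠ 0) :
    commYB12 a b (commYB13 a c (commYB23 b c t)) =
      commYB23 b c (commYB13 a c (commYB12 a b t)) :=
  commYB_parametric_yang_baxter_general a b c t h1 h2 h4 h5
end

section
/- The function I4 = (x1 − y2 + X1·Y2)(x2 − y1 − X2·Y1) − a·Y1·Y2 − b·X1·X2 is invariant under the commutative Yang-Baxter map Y_{a,b}: with notation as given, (u1 − v2 + U1·V2)(u2 − v1 − U2·V1) − a·V1·V2 − b·U1·U2 = I4. -/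
set_option maxHeartbeats 2000000 in
theorem commYB_invariant_I4 {K : Type*} [Field K] (a b : K)
    (x1 x2 X1 X2 y1 y2 Y1 Y2 : K) (hD : x1 - y2 + X1 * Y2 ≠ 0)
    (u1 u2 U1 U2 v1 v2 V1 V2 : K)
    (hu1 : u1 = y1 + (a - b) / (x1 - y2 + X1 * Y2))
    (hu2 : u2 = y2)
    (hU1 : U1 = Y1 - ((a - b) / (x1 - y2 + X1 * Y2)) * X1)
    (hU2 : U2 = Y2)
    (hv1 : v1 = x1)
    (hv2 : v2 = x2 + (a - b) / (x1 - y2 + X1 * Y2))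
    (hV1 : V1 = X1)
    (hV2 : V2 = X2 + ((a - b) / (x1 - y2 + X1 * Y2)) * Y2) :
    (u1 - v2 + U1 * V2) * (u2 - v1 - U2 * V1) - a * V1 * V2 - b * U1 * U2 =
      (x1 - y2 + X1 * Y2) * (x2 - y1 - X2 * Y1) - a * Y1 * Y2 - b * X1 * X2 := by
  rw [hu1, hu2, hU1, hU2, hv1, hv2, hV1, hV2]
  have hd : (a - b) / (x1 - y2 + X1 * Y2) * (x1 - y2 + X1 * Y2) = a - b :=
    div_mul_cancel₀ _ hD
  linear_combination (X1 * X2 - Y1 * Y2 + ((a - b) / (x1 - y2 + X1 * Y2)) * X1 * Y2) * hd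
end

section
/- The four invariants I1 = (x1 − y2)(x2 − y1), I2 = X1·X2 + Y1·Y2, I3 = x2 − x1 + y2 − y1, and I4 = (x1 − y2 + X1·Y2)(x2 − y1 − X2·Y1) − a·Y1·Y2 − b·X1·X2 are pairwise in involution with respect to the Poisson bracket on K^8 given by {x1,x2} = {X1,X2} = {y1,y2} = {Y1,Y2} = 1 and all other brackets of coordinates zero. -/
open MvPolynomial

/-- The canonical Poisson bracket on polynomials in the eight coordinates
`(x1, x2, X1, X2, y1, y2, Y1, Y2)`, indexed as `0,…,7`, with canonical pairs
`(0,1), (2,3), (4,5), (6,7)`. -/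
noncomputable def pbracket (F G : MvPolynomial (Fin 8) ℝ) : MvPolynomial (Fin 8) ℝ :=
  (pderiv 0 F * pderiv 1 G - pderiv 1 F * pderiv 0 G) +
  (pderiv 2 F * pderiv 3 G - pderiv 3 F * pderiv 2 G) +
  (pderiv 4 F * pderiv 5 G - pderiv 5 F * pderiv 4 G) +
  (pderiv 6 F * pderiv 7 G - pderiv 7 F * pderiv 6 G)

/-- `I1 = (x1 - y2)(x2 - y1)`. -/
noncomputable def I1p : MvPolynomial (Fin 8) ℝ := (X 0 - X 5) * (X 1 - X 4)

/-- `I2 = X1·X2 + Y1·Y2`. -/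
noncomputable def I2p : MvPolynomial (Fin 8) ℝ := X 2 * X 3 + X 6 * X 7

/-- `I3 = x2 - x1 + y2 - y1`. -/
noncomputable def I3p : MvPolynomial (Fin 8) ℝ := X 1 - X 0 + X 5 - X 4

/-- `I4 = (x1 - y2 + X1·Y2)(x2 - y1 - X2·Y1) - a·Y1·Y2 - b·X1·X2`. -/
noncomputable def I4p (a b : ℝ) : MvPolynomial (Fin 8) ℝ :=
  (X 0 - X 5 + X 2 * X 7) * (X 1 - X 4 - X 3 * X 6) -
    C a * (X 6 * X 7) - C b * (X 2 * X 3)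

lemma pderivX (i j : Fin 8) :
    pderiv i (X j : MvPolynomial (Fin 8) ℝ) = if i = j then 1 else 0 := by
  rcases eq_or_ne i j with h | h
  · simp [h, pderiv_X_self]
  · simp [pderiv_X, Pi.single_eq_of_ne (Ne.symm h), if_neg h]

set_option maxHeartbeats 2000000 in
/-- The four invariants of the commutative Yang-Baxter map are pairwise in
involution with respect to the canonical Poisson bracket. -/
theorem invariants_in_involution (a b : ℝ) :
    pbracket I1p I2p = 0 ∧ pbracket I1p I3p = 0 ∧ pbracket I1p (I4p a b) = 0 ∧
    pbracket I2p I3p = 0 ∧ pbracket I2p (I4p a b) = 0 ∧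
    pbracket I3p (I4p a b) = 0 := by
  refine ⟨?_, ?_, ?_, ?_, ?_, ?_⟩ <;>
    · simp only [pbracket, I1p, I2p, I3p, I4p, map_add, map_sub, Derivation.leibniz,
        smul_eq_mul, pderiv_C, pderivX, Fin.isValue, Fin.reduceEq, reduceIte,
        mul_zero, zero_mul, mul_one, one_mul, sub_zero, zero_sub, add_zero, zero_add]
      try ring
end

section
/- The map Y_{a,b}(x1,x2,y1,y2) = (y1 + (a−b)/(x1−y2), y2, x1, x2 + (a−b)/(x1−y2)) preserves the canonical symplectic/Poisson structure on K^4 with {x1,x2} = {y1,y2} = 1, {x_i,y_j} = 0: i.e., writing Y_{a,b}(x1,x2,y1,y2) = (u1,u2,v1,v2), the brackets satisfy {u1,u2} = {v1,v2} = 1 and {u_i, v_j} = 0 for all i, j, where brackets of functions are computed via the chain rule from the coordinate brackets. -/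
/-- The partial derivative of `F : ℝ^4 → ℝ` in the `i`-th coordinate direction. -/
noncomputable def pd (i : Fin 4) (F : (Fin 4 → ℝ) → ℝ) (p : Fin 4 → ℝ) : ℝ :=
  fderiv ℝ F p (Pi.single i 1)

/-- The canonical Poisson bracket on functions of `(x1, x2, y1, y2)`
(coordinates `0,1,2,3`), with `{x1,x2} = {y1,y2} = 1` and mixed brackets zero. -/
noncomputable def pb (F G : (Fin 4 → ℝ) → ℝ) (p : Fin 4 → ℝ) : ℝ :=
  pd 0 F p * pd 1 G p - pd 1 F p * pd 0 G p +
  pd 2 F p * pd 3 G p - pd 3 F p * pd 2 G p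

/-- The components of the Yang-Baxter map `Y_{a,b}` on `(x1,x2,y1,y2)`. -/
noncomputable def u1f (a b : ℝ) (p : Fin 4 → ℝ) : ℝ := p 2 + (a - b) / (p 0 - p 3)
noncomputable def u2f (p : Fin 4 → ℝ) : ℝ := p 3
noncomputable def v1f (p : Fin 4 → ℝ) : ℝ := p 0
noncomputable def v2f (a b : ℝ) (p : Fin 4 → ℝ) : ℝ := p 1 + (a - b) / (p 0 - p 3)

section PartialDerivatives

variable {p : Fin 4 → ℝ}

lemma pd_eq_of_hasFDerivAt {F : (Fin 4 → ℝ) → ℝ} {F' : (Fin 4 → ℝ) →L[ℝ] ℝ}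
    (hF : HasFDerivAt F F' p) (i : Fin 4) : pd i F p = F' (Pi.single i 1) := by
  rw [pd, hF.fderiv]

lemma pd_coord (i j : Fin 4) : pd i (fun q => q j) p = if i = j then 1 else 0 := by
  rw [pd_eq_of_hasFDerivAt (hasFDerivAt_apply j p)]
  simp [Pi.single_apply, eq_comm]

lemma pd_add {F G : (Fin 4 → ℝ) → ℝ} (hF : DifferentiableAt ℝ F p)
    (hG : DifferentiableAt ℝ G p) (i : Fin 4) :
    pd i (fun q => F q + G q) p = pd i F p + pd i G p := by
  simp only [pd, fderiv_fun_add hF hG]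
  rfl

lemma hasFDerivAt_comp_sub_coord {f : ℝ → ℝ} (hf : DifferentiableAt ℝ f (p 0 - p 3)) :
    HasFDerivAt (fun q : Fin 4 → ℝ => f (q 0 - q 3))
      (deriv f (p 0 - p 3) •
        ((ContinuousLinearMap.proj 0 : (Fin 4 → ℝ) →L[ℝ] ℝ) - ContinuousLinearMap.proj 3)) p :=
  hf.hasDerivAt.comp_hasFDerivAt p
    ((hasFDerivAt_apply 0 p).sub (hasFDerivAt_apply 3 p))

lemma pd_comp_sub_coord {f : ℝ → ℝ} (hf : DifferentiableAt ℝ f (p 0 - p 3)) (i : Fin 4) :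
    pd i (fun q => f (q 0 - q 3)) p =
      deriv f (p 0 - p 3) * ((if i = 0 then 1 else 0) - if i = 3 then 1 else 0) := by
  rw [pd_eq_of_hasFDerivAt (hasFDerivAt_comp_sub_coord hf)]
  simp [Pi.single_apply, eq_comm]

end PartialDerivatives

/-- The shear `f (x1 - y2)` drops out of every bracket: `x1 - y2` Poisson-commutes with `x1`
and `y2`, and its brackets with `y1` and `x2` are equal, so they cancel in `{u1, v2}`. -/
theorem pb_shear_components (f : ℝ → ℝ) (p : Fin 4 → ℝ)
    (hf : DifferentiableAt ℝ f (p 0 - p 3)) :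
    pb (fun q => q 2 + f (q 0 - q 3)) (fun q => q 3) p = 1 ∧
    pb (fun q => q 0) (fun q => q 1 + f (q 0 - q 3)) p = 1 ∧
    pb (fun q => q 2 + f (q 0 - q 3)) (fun q => q 0) p = 0 ∧
    pb (fun q => q 2 + f (q 0 - q 3)) (fun q => q 1 + f (q 0 - q 3)) p = 0 ∧
    pb (fun q => q 3) (fun q => q 0) p = 0 ∧
    pb (fun q => q 3) (fun q => q 1 + f (q 0 - q 3)) p = 0 := by
  have hφ : DifferentiableAt ℝ (fun q : Fin 4 → ℝ => f (q 0 - q 3)) p :=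
    (hasFDerivAt_comp_sub_coord hf).differentiableAt
  simp only [pb, pd_add (differentiableAt_apply _ p) hφ, pd_coord, pd_comp_sub_coord hf]
  norm_num [Fin.ext_iff]

/-- The map `Y_{a,b}` preserves the canonical Poisson structure on `K^4`:
`{u1,u2} = {v1,v2} = 1` and all the mixed brackets `{u_i, v_j}` vanish. -/
theorem yblift_symplectic (a b : ℝ) (p : Fin 4 → ℝ) (h : p 0 ≠ p 3) :
    pb (u1f a b) u2f p = 1 ∧ pb v1f (v2f a b) p = 1 ∧
    pb (u1f a b) v1f p = 0 ∧ pb (u1f a b) (v2f a b) p = 0 ∧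
    pb u2f v1f p = 0 ∧ pb u2f (v2f a b) p = 0 :=
  pb_shear_components (fun t => (a - b) / t) p
    ((differentiableAt_const _).div differentiableAt_id (sub_ne_zero.mpr h))
end
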